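/- arXiv:2102.01778 — 4 statements merged into one kernel-verified Lean document; each statement's English description precedes it below -/
import Mathlib

section
/- For every integer n ≥ 3, the divisor function satisfies log d(n) ≤ C · (log n)/(log log n) for some absolute constant C, i.e., log d(n) = o(log n). -/
/-!
Write `d(n) = ∏ (aₚ + 1)` over the prime factorisation `n = ∏ p ^ aₚ` and split the primes at a
threshold `y`. There are at most `y` primes `p ≤ y`, and each has `aₚ ≤ log₂ n`, so they contribute
at most `y · log (log₂ n + 1)` to `log d(n)`. For `p > y`, `log (aₚ + 1) ≤ aₚ ≤ aₚ log p / log y`,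
so these contribute at most `log n / log y`. The choice `y = log n / (log log n)²` makes both
terms `O(log n / log log n)` once `log log n ≥ 64`; below that, `d(n) ≤ n` suffices.
-/

/-- `d n` is the number of positive divisors of `n`. -/
noncomputable def divFun (n : ℕ) : ℕ := n.divisors.card

open Real Finset

theorem Real.log_le_div_four {x : ℝ} (hx : 64 ≤ x) : Real.log x ≤ x / 4 := by
  have h8 : 8 ≤ √x := le_sqrt_of_sq_le (by linarith)
  have hsq : √x * √x = x := mul_self_sqrt (by linarith)
  have hlog := Real.log_le_sub_one_of_pos (x := √x) (by linarith)
  rw [Real.log_sqrt (by linarith)] at hlog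
  nlinarith

namespace Nat

theorem log_card_divisors {n : ℕ} (hn : n ≠ 0) :
    Real.log #n.divisors = ∑ p ∈ n.primeFactors, Real.log (n.factorization p + 1) := by
  rw [card_divisors hn, cast_prod, Real.log_prod fun p _ => by positivity]
  push_cast
  rfl

theorem log_eq_sum_primeFactors (n : ℕ) :
    Real.log n = ∑ p ∈ n.primeFactors, n.factorization p * Real.log p := by
  rw [Real.log_nat_eq_sum_factorization, Finsupp.sum, support_factorization]

theorem factorization_mul_log_le_log {n : ℕ} (hn : n ≠ 0) (p : ℕ) :
    n.factorization p * Real.log p ≤ Real.log n := by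
  rw [← Real.log_pow]
  exact Real.log_le_log (by exact_mod_cast ordProj_pos n p) (by exact_mod_cast ordProj_le p hn)

theorem factorization_le_logb_two {n p : ℕ} (hn : n ≠ 0) (hp : p.Prime) :
    (n.factorization p : ℝ) ≤ logb 2 n := by
  rw [logb, le_div_iff₀ (by positivity)]
  calc n.factorization p * Real.log 2 ≤ n.factorization p * Real.log p := by
        gcongr
        exact_mod_cast hp.two_le
    _ ≤ Real.log n := factorization_mul_log_le_log hn p

theorem card_filter_cast_le {s : Finset ℕ} (hs : 0 ∉ s) {y : ℝ} (hy : 0 ≤ y) :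
    (#(s.filter (fun p : ℕ => (p : ℝ) ≤ y)) : ℝ) ≤ y := by
  have hsub : s.filter (fun p : ℕ => (p : ℝ) ≤ y) ⊆ Icc 1 ⌊y⌋₊ := fun p hp => by
    obtain ⟨hps, hpy⟩ := mem_filter.1 hp
    exact mem_Icc.2 ⟨one_le_iff_ne_zero.2 (ne_of_mem_of_not_mem hps hs), le_floor hpy⟩
  calc (#(s.filter (fun p : ℕ => (p : ℝ) ≤ y)) : ℝ) ≤ ⌊y⌋₊ := by
        exact_mod_cast (card_le_card hsub).trans (card_Icc 1 _).le
    _ ≤ y := floor_le hy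

theorem sum_log_factorization_add_one_le_of_le {n : ℕ} (hn : n ≠ 0) {y : ℝ} (hy : 0 ≤ y) :
    ∑ p ∈ n.primeFactors.filter (fun p : ℕ => (p : ℝ) ≤ y), Real.log (n.factorization p + 1)
      ≤ y * Real.log (logb 2 n + 1) := by
  have hlogb : 0 ≤ logb 2 n := logb_nonneg one_lt_two (by exact_mod_cast one_le_iff_ne_zero.2 hn)
  calc _ ≤ #(n.primeFactors.filter (fun p : ℕ => (p : ℝ) ≤ y)) * Real.log (logb 2 n + 1) := by
        rw [← nsmul_eq_mul]
        refine sum_le_card_nsmul _ _ _ fun p hp => ?_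
        have hp := prime_of_mem_primeFactors (mem_filter.1 hp).1
        gcongr
        exact factorization_le_logb_two hn hp
    _ ≤ y * Real.log (logb 2 n + 1) := by
        gcongr
        · exact Real.log_nonneg (by linarith)
        · exact card_filter_cast_le (fun h => not_prime_zero (prime_of_mem_primeFactors h)) hy

theorem sum_log_factorization_add_one_le_of_lt {n : ℕ} {y : ℝ} (hy : 1 < y) :
    ∑ p ∈ n.primeFactors.filter (fun p : ℕ => ¬(p : ℝ) ≤ y), Real.log (n.factorization p + 1)
      ≤ Real.log n / Real.log y := by
  have hlogy : 0 < Real.log y := Real.log_pos hy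
  rw [log_eq_sum_primeFactors, sum_div]
  refine (sum_le_sum fun p hp => ?_).trans <|
    sum_le_sum_of_subset_of_nonneg (filter_subset _ _) fun p hp _ => ?_
  · have hyp : y < p := not_le.1 (mem_filter.1 hp).2
    rw [le_div_iff₀ hlogy]
    calc Real.log (n.factorization p + 1) * Real.log y
        ≤ n.factorization p * Real.log y := by
          gcongr
          linarith [Real.log_le_sub_one_of_pos (x := n.factorization p + 1) (by positivity)]
      _ ≤ n.factorization p * Real.log p := by gcongr
  · have := (prime_of_mem_primeFactors hp).one_lt
    positivity

theorem log_card_divisors_le {n : ℕ} (hn : n ≠ 0) {y : ℝ} (hy : 1 < y) :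
    Real.log #n.divisors ≤ y * Real.log (logb 2 n + 1) + Real.log n / Real.log y := by
  rw [log_card_divisors hn, ← sum_filter_add_sum_filter_not _ (fun p : ℕ => (p : ℝ) ≤ y)]
  exact _root_.add_le_add (sum_log_factorization_add_one_le_of_le hn (by linarith))
    (sum_log_factorization_add_one_le_of_lt hy)

theorem log_card_divisors_le_of_le_log_log {n : ℕ} (hn : 64 ≤ Real.log (Real.log n)) :
    Real.log #n.divisors ≤ 4 * (Real.log n / Real.log (Real.log n)) := by
  set L := Real.log n
  set l := Real.log L
  have hl : 0 < l := by linarith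
  have hL : 1 < L := by
    by_contra! h
    linarith [log_nonpos (Real.log_natCast_nonneg n) h]
  have hn0 : n ≠ 0 := by
    rintro rfl
    norm_num [L] at hL
  have hlogy : l / 2 ≤ Real.log (L / l ^ 2) := by
    rw [Real.log_div (by positivity) (by positivity), Real.log_pow]
    push_cast
    linarith [log_le_div_four hn]
  have hy : 1 < L / l ^ 2 := (Real.log_pos_iff (x := L / l ^ 2) (by positivity)).1 (by linarith)
  have hlogb : Real.log (logb 2 n + 1) ≤ 2 * l := by
    have h0 : 0 < logb 2 n := _root_.div_pos (by linarith) (by positivity)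
    have h2 : logb 2 n ≤ 2 * L := by
      rw [logb, div_le_iff₀ (by positivity)]
      nlinarith [log_two_gt_d9]
    calc Real.log (logb 2 n + 1) ≤ Real.log (3 * L) :=
          Real.log_le_log (by linarith) (by linarith)
      _ = Real.log 3 + l := Real.log_mul (by norm_num) (by positivity)
      _ ≤ 2 * l := by linarith [Real.log_le_sub_one_of_pos (x := 3) (by norm_num)]
  calc Real.log #n.divisors ≤ L / l ^ 2 * Real.log (logb 2 n + 1) + L / Real.log (L / l ^ 2) :=
        log_card_divisors_le hn0 hy
    _ ≤ L / l ^ 2 * (2 * l) + L / (l / 2) := by gcongr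
    _ = 4 * (L / l) := by field_simp; ring

end Nat

/-- For every integer `n ≥ 3`, `log d(n) ≤ C · log n / log log n` for an absolute constant `C`. -/
theorem log_divisor_bound :
    ∃ C : ℝ, 0 < C ∧ ∀ n : ℕ, 3 ≤ n →
      Real.log (divFun n) ≤ C * (Real.log n / Real.log (Real.log n)) := by
  refine ⟨64, by norm_num, fun n hn => ?_⟩
  have hn0 : n ≠ 0 := by omega
  have hL : 1 < Real.log n := (lt_log_iff_exp_lt (by positivity)).2 <| by
    have : (3 : ℝ) ≤ n := by exact_mod_cast hn
    linarith [exp_one_lt_d9]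
  have hl : 0 < Real.log (Real.log n) := log_pos hL
  rcases le_or_gt (Real.log (Real.log n)) 64 with hl64 | hl64
  · have hd : 0 < divFun n := card_pos.2 ⟨n, Nat.mem_divisors_self n hn0⟩
    calc Real.log (divFun n) ≤ Real.log n :=
          log_le_log (by exact_mod_cast hd) (by exact_mod_cast Nat.card_divisors_le_self n)
      _ ≤ 64 * (Real.log n / Real.log (Real.log n)) := by
          rw [mul_div_assoc', le_div_iff₀ hl]
          nlinarith
  · calc Real.log (divFun n) ≤ 4 * (Real.log n / Real.log (Real.log n)) :=
          Nat.log_card_divisors_le_of_le_log_log hl64.le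
      _ ≤ 64 * (Real.log n / Real.log (Real.log n)) := by gcongr; norm_num
end

section
/- For N ≥ 3, the summatory divisor function satisfies D(N) = N log N + (2γ − 1)N + O(√N), where γ is Euler's constant; in particular D(N) = O(N log N). -/
/-!
Dirichlet's hyperbola method. Both `D(N)` and `∑_{a ≤ N} ⌊N/a⌋` count the lattice points
`(a, b)` with `a, b ≥ 1` and `ab ≤ N`; splitting these points according to `a ≤ M` or `b ≤ M`,
where `M = ⌊√N⌋`, gives `D(N) = 2 ∑_{a ≤ M} ⌊N/a⌋ - M²`. Dropping the floors costs `O(M)`,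
and `∑_{a ≤ M} 1/a = log M + γ + O(1/M)`, so `D(N) = 2N (log M + γ) - M² + O(M)`. Finally
`M² = N + O(√N)`, hence `2N log M = N log N + O(√N)`.
-/

open Finset

/-- `D N = ∑_{n=1}^N d(n)`, the summatory divisor function. -/
noncomputable def sumDiv (N : ℕ) : ℕ := ∑ n ∈ Finset.Icc 1 N, divFun n

open Real

theorem sumDiv_eq_sum_div (N : ℕ) : sumDiv N = ∑ a ∈ Ioc 0 N, N / a := by
  rw [← ArithmeticFunction.sum_Ioc_sigma0_eq_sum_div]
  exact sum_congr rfl fun n _ => (ArithmeticFunction.sigma_zero_apply n).symm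

def hyperbolaPoints (N M K : ℕ) : Finset (ℕ × ℕ) :=
  {x ∈ Ioc 0 M ×ˢ Ioc 0 K | x.1 * x.2 ≤ N}

theorem mem_hyperbolaPoints {N M K : ℕ} {x : ℕ × ℕ} :
    x ∈ hyperbolaPoints N M K ↔ (0 < x.1 ∧ x.1 ≤ M) ∧ (0 < x.2 ∧ x.2 ≤ K) ∧ x.1 * x.2 ≤ N := by
  simp only [hyperbolaPoints, mem_filter, mem_product, mem_Ioc, and_assoc]

theorem card_hyperbolaPoints_comm (N M K : ℕ) :
    #(hyperbolaPoints N M K) = #(hyperbolaPoints N K M) :=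
  card_nbij' Prod.swap Prod.swap
    (fun x hx => by simp_all [mem_hyperbolaPoints, mul_comm])
    (fun x hx => by simp_all [mem_hyperbolaPoints, mul_comm])
    (fun _ _ => rfl) (fun _ _ => rfl)

theorem card_hyperbolaPoints (N M : ℕ) : #(hyperbolaPoints N M N) = ∑ a ∈ Ioc 0 M, N / a := by
  rw [hyperbolaPoints, card_filter, sum_product]
  refine sum_congr rfl fun a ha => ?_
  have ha : 0 < a := (mem_Ioc.1 ha).1
  rw [← card_filter, ← Nat.sub_zero (N / a), ← Nat.card_Ioc]
  congr 1
  ext b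
  simp only [mem_filter, mem_Ioc, Nat.le_div_iff_mul_le ha, mul_comm b a, and_congr_left_iff,
    and_iff_left_iff_imp]
  intro hab hb
  nlinarith

/-- `M * K ≤ N` puts the whole box `(0, M] × (0, K]` under the hyperbola `ab = N`, and
`N < (M + 1) * (K + 1)` leaves no lattice point under it with both `a > M` and `b > K`. -/
theorem sum_Ioc_div_hyperbola {N M K : ℕ} (hMK : M * K ≤ N) (hN : N < (M + 1) * (K + 1)) :
    ∑ a ∈ Ioc 0 N, N / a + M * K = ∑ a ∈ Ioc 0 M, N / a + ∑ b ∈ Ioc 0 K, N / b := by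
  have hunion : hyperbolaPoints N M N ∪ hyperbolaPoints N N K = hyperbolaPoints N N N := by
    ext ⟨a, b⟩
    simp only [mem_union, mem_hyperbolaPoints]
    constructor
    · rintro (⟨⟨ha, -⟩, ⟨hb, -⟩, hab⟩ | ⟨⟨ha, -⟩, ⟨hb, -⟩, hab⟩) <;>
        exact ⟨⟨ha, by nlinarith⟩, ⟨hb, by nlinarith⟩, hab⟩
    · rintro ⟨⟨ha, haN⟩, ⟨hb, hbN⟩, hab⟩
      by_cases haM : a ≤ M
      · exact Or.inl ⟨⟨ha, haM⟩, ⟨hb, hbN⟩, hab⟩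
      · refine Or.inr ⟨⟨ha, haN⟩, ⟨hb, ?_⟩, hab⟩
        by_contra! hbK
        nlinarith
  have hinter : hyperbolaPoints N M N ∩ hyperbolaPoints N N K = Ioc 0 M ×ˢ Ioc 0 K := by
    ext ⟨a, b⟩
    simp only [mem_inter, mem_hyperbolaPoints, mem_product, mem_Ioc]
    constructor
    · rintro ⟨⟨ha, -, -⟩, -, hb, -⟩
      exact ⟨ha, hb⟩
    · rintro ⟨⟨ha, haM⟩, hb, hbK⟩
      have hab : a * b ≤ N := (Nat.mul_le_mul haM hbK).trans hMK
      exact ⟨⟨⟨ha, haM⟩, ⟨hb, by nlinarith⟩, hab⟩, ⟨ha, by nlinarith⟩, ⟨hb, hbK⟩, hab⟩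
  rw [← card_hyperbolaPoints, ← card_hyperbolaPoints, ← card_hyperbolaPoints,
    card_hyperbolaPoints_comm N K N, ← card_union_add_card_inter, hunion, hinter]
  simp

theorem sumDiv_add_sqrt_mul_sqrt (N : ℕ) :
    sumDiv N + N.sqrt * N.sqrt = 2 * ∑ a ∈ Ioc 0 N.sqrt, N / a := by
  rw [sumDiv_eq_sum_div, sum_Ioc_div_hyperbola (Nat.sqrt_le N) (Nat.lt_succ_sqrt N), two_mul]

theorem abs_sum_div_sub_mul_harmonic_le (N M : ℕ) :
    |∑ a ∈ Ioc 0 M, ((N / a : ℕ) : ℝ) - N * harmonic M| ≤ M := by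
  have hH : (N : ℝ) * harmonic M = ∑ a ∈ Ioc 0 M, (N : ℝ) / a := by
    simp only [harmonic_eq_sum_Icc, Rat.cast_sum, Rat.cast_inv, Rat.cast_natCast, mul_sum,
      div_eq_mul_inv]
    -- `Icc 1 M` and `Ioc 0 M` are definitionally equal in `ℕ`
    rfl
  calc |∑ a ∈ Ioc 0 M, ((N / a : ℕ) : ℝ) - N * harmonic M|
      ≤ ∑ a ∈ Ioc 0 M, |((N / a : ℕ) : ℝ) - N / a| := by
        rw [hH, ← sum_sub_distrib]
        exact abs_sum_le_sum_abs _ _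
    _ ≤ ∑ _a ∈ Ioc 0 M, (1 : ℝ) := by
        refine sum_le_sum fun a _ => ?_
        have hfloor := Nat.sub_one_lt_floor ((N : ℝ) / a)
        rw [Nat.floor_div_eq_div] at hfloor
        rw [abs_sub_comm, abs_of_nonneg (sub_nonneg.2 Nat.cast_div_le)]
        linarith
    _ = M := by simp

theorem log_sub_log_le_sub_div {x y : ℝ} (hx : 0 < x) (hy : 0 < y) :
    log y - log x ≤ (y - x) / x := by
  rw [← log_div hy.ne' hx.ne', sub_div, div_self hx.ne']
  exact log_le_sub_one_of_pos (div_pos hy hx)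

theorem abs_harmonic_sub_log_sub_eulerMascheroniConstant_le {M : ℕ} (hM : M ≠ 0) :
    |harmonic M - log M - eulerMascheroniConstant| ≤ 1 / M := by
  have lower := eulerMascheroniConstant_lt_eulerMascheroniSeq' M
  have upper := eulerMascheroniSeq_lt_eulerMascheroniConstant M
  rw [eulerMascheroniSeq', if_neg hM] at lower
  rw [eulerMascheroniSeq] at upper
  have hM' : (0 : ℝ) < M := by positivity
  have hlog := log_sub_log_le_sub_div hM' (by positivity : (0 : ℝ) < M + 1)
  rw [add_sub_cancel_left] at hlog
  rw [abs_of_nonneg (by linarith)]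
  linarith

theorem natCast_le_sqrt_mul_sqrt_add_two_mul_sqrt (N : ℕ) :
    (N : ℝ) ≤ N.sqrt * N.sqrt + 2 * N.sqrt := by
  rw [two_mul, ← add_assoc]
  exact_mod_cast Nat.sqrt_le_add N

theorem abs_log_sub_two_mul_log_sqrt_le {N : ℕ} (hN : N ≠ 0) :
    |log N - 2 * log N.sqrt| ≤ 2 / N.sqrt := by
  have hM : (0 : ℝ) < N.sqrt := by simpa [Nat.sqrt_pos] using Nat.pos_of_ne_zero hN
  have hlower : (N.sqrt : ℝ) * N.sqrt ≤ N := by exact_mod_cast Nat.sqrt_le N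
  have hupper := natCast_le_sqrt_mul_sqrt_add_two_mul_sqrt N
  have hlog : 2 * log N.sqrt = log (N.sqrt * N.sqrt) := by rw [log_mul hM.ne' hM.ne']; ring
  rw [hlog, abs_of_nonneg (sub_nonneg.2 (log_le_log (by positivity) hlower))]
  calc log N - log (N.sqrt * N.sqrt) ≤ (N - N.sqrt * N.sqrt) / (N.sqrt * N.sqrt) :=
        log_sub_log_le_sub_div (by positivity) (by positivity)
    _ ≤ 2 * N.sqrt / (N.sqrt * N.sqrt) := by gcongr; linarith
    _ = 2 / N.sqrt := by field_simp

theorem abs_sumDiv_sub_le {N : ℕ} (hN : N ≠ 0) :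
    |(sumDiv N : ℝ) - (N * log N + (2 * eulerMascheroniConstant - 1) * N)| ≤ 16 * √N := by
  set M := N.sqrt
  have hM : M ≠ 0 := (Nat.sqrt_pos.2 (Nat.pos_of_ne_zero hN)).ne'
  have hM₁ : (1 : ℝ) ≤ M := by exact_mod_cast Nat.one_le_iff_ne_zero.2 hM
  have hN₀ : (0 : ℝ) ≤ N := N.cast_nonneg
  have hsumDiv : (sumDiv N : ℝ) = 2 * ∑ a ∈ Ioc 0 M, ((N / a : ℕ) : ℝ) - M * M := by
    rw [eq_sub_iff_add_eq]
    exact_mod_cast sumDiv_add_sqrt_mul_sqrt N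
  have hlower : (M : ℝ) * M ≤ N := by exact_mod_cast Nat.sqrt_le N
  have hupper := natCast_le_sqrt_mul_sqrt_add_two_mul_sqrt N
  have hNM : (N : ℝ) * (1 / M) ≤ 3 * M := by
    rw [mul_one_div, div_le_iff₀ (by positivity)]
    nlinarith
  have hharmonic : |N * (harmonic M - log M - eulerMascheroniConstant)| ≤ N * (1 / M) := by
    rw [abs_mul, abs_of_nonneg hN₀]
    exact mul_le_mul_of_nonneg_left (abs_harmonic_sub_log_sub_eulerMascheroniConstant_le hM) hN₀
  have hlog : |N * (log N - 2 * log M)| ≤ N * (2 / M) := by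
    rw [abs_mul, abs_of_nonneg hN₀]
    exact mul_le_mul_of_nonneg_left (abs_log_sub_two_mul_log_sqrt_le hN) hN₀
  obtain ⟨hS₁, hS₂⟩ := abs_le.1 (abs_sum_div_sub_mul_harmonic_le N M)
  obtain ⟨hH₁, hH₂⟩ := abs_le.1 hharmonic
  obtain ⟨hL₁, hL₂⟩ := abs_le.1 hlog
  have hsqrt : (M : ℝ) ≤ √N := nat_sqrt_le_real_sqrt
  have hdecomp : (sumDiv N : ℝ) - (N * log N + (2 * eulerMascheroniConstant - 1) * N) =
      2 * (∑ a ∈ Ioc 0 M, ((N / a : ℕ) : ℝ) - N * harmonic M)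
        + 2 * (N * (harmonic M - log M - eulerMascheroniConstant))
        - N * (log N - 2 * log M) + (N - M * M) := by
    rw [hsumDiv]
    ring
  have htwo : (N : ℝ) * (2 / M) = 2 * (N * (1 / M)) := by ring
  rw [abs_le, hdecomp]
  constructor <;> linarith

theorem sumDiv_le_mul_two_add_log (N : ℕ) : (sumDiv N : ℝ) ≤ N * (2 + log N) := by
  have hsumDiv : (sumDiv N : ℝ) = ∑ a ∈ Ioc 0 N, ((N / a : ℕ) : ℝ) := by
    exact_mod_cast sumDiv_eq_sum_div N
  have hS := (abs_le.1 (abs_sum_div_sub_mul_harmonic_le N N)).2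
  have hH : (N : ℝ) * harmonic N ≤ N * (1 + log N) :=
    mul_le_mul_of_nonneg_left (harmonic_le_one_add_log N) N.cast_nonneg
  linarith

/-- For `N ≥ 3`, `D(N) = N log N + (2γ − 1)N + O(√N)`, where `γ` is Euler's constant;
in particular `D(N) = O(N log N)`. -/
theorem sumDiv_asymptotic :
    ∃ C : ℝ, 0 < C ∧ ∀ N : ℕ, 3 ≤ N →
      |(sumDiv N : ℝ) - ((N : ℝ) * Real.log N + (2 * Real.eulerMascheroniConstant - 1) * N)|
          ≤ C * Real.sqrt N
      ∧ (sumDiv N : ℝ) ≤ C * ((N : ℝ) * Real.log N) := by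
  refine ⟨16, by norm_num, fun N hN => ⟨abs_sumDiv_sub_le (by omega), ?_⟩⟩
  have hN' : (3 : ℝ) ≤ N := by exact_mod_cast hN
  have hlog : 1 ≤ log N := by
    rw [le_log_iff_exp_le (by positivity)]
    linarith [exp_one_lt_d9]
  nlinarith [sumDiv_le_mul_two_add_log N]
end

section
/- Let χ_s(θ) = χ(2^{3s}θ) for a Schwartz function χ with 1_{[−1/8,1/8]} ≤ χ ≤ 1_{[−1/4,1/4]}, s ≥ 1, 2^s ≤ Q < 2^{s+1}, and suppose Q^3 ≤ C_p τ for an appropriate constant. Then for integers x with 2^k τ < |x| ≤ 2^{k+1}τ, k ≥ 2, one has |(Γ_τ * χ̌_s)(x)| ≤ C · 2^{−2k}/τ. -/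
open Finset

/-- `e x = exp(2πix)`. -/
noncomputable def eFun (x : ℝ) : ℂ := Complex.exp (2 * Real.pi * Complex.I * x)

/-- `Γ̂_N(θ) = (1/N) ∑_{n=0}^{N−1} e(nθ)`, the multiplier of the standard average. -/
noncomputable def gammaHat (N : ℕ) (θ : ℝ) : ℂ :=
  (1 / (N : ℂ)) * ∑ n ∈ Finset.range N, eFun (n * θ)

/-- The Ramanujan sum `c_Q(x) = ∑_{0 ≤ A < Q, gcd(A,Q)=1} e(Ax/Q)`. -/
noncomputable def ramanujanSum (Q : ℕ) (x : ℤ) : ℂ :=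
  ∑ A ∈ (Finset.range Q).filter (fun A => A.Coprime Q), eFun ((A : ℝ) * x / Q)

/-- The dilated bump `χ_s(θ) = χ(2^{3s} θ)`. -/
noncomputable def chiS (χ : SchwartzMap ℝ ℝ) (s : ℕ) (θ : ℝ) : ℝ := χ ((2 : ℝ) ^ (3 * s) * θ)

/-- `χ̌_s(y) = ∫_ℝ χ_s(θ) e(yθ) dθ`, the inverse Fourier transform of the bump `χ_s`. -/
noncomputable def chiCheck (χ : SchwartzMap ℝ ℝ) (s : ℕ) (y : ℝ) : ℂ :=
  ∫ θ : ℝ, (chiS χ s θ : ℂ) * eFun (y * θ)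

/-- The convolution `(Γ_N * χ̌_s)(x) = (1/N) ∑_{n=0}^{N-1} χ̌_s(x+n)`. -/
noncomputable def gammaConvChiCheck (χ : SchwartzMap ℝ ℝ) (s N : ℕ) (x : ℤ) : ℂ :=
  (1 / (N : ℂ)) * ∑ n ∈ Finset.range N, chiCheck χ s ((x : ℝ) + n)

/-- The approximating multiplier
`L̂_{Q,N}(θ) = (2/Q) ∑_{A ∈ 𝔸_Q} Γ̂_N(θ − A/Q) χ_s(θ − A/Q)` for `2^s ≤ Q < 2^{s+1}`. -/
noncomputable def lHat (χ : SchwartzMap ℝ ℝ) (s Q N : ℕ) (θ : ℝ) : ℂ :=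
  (2 / (Q : ℂ)) * ∑ A ∈ (Finset.range Q).filter (fun A => A.Coprime Q),
    gammaHat N (θ - (A : ℝ) / Q) * (chiS χ s (θ - (A : ℝ) / Q) : ℂ)

/-- `χ` is a Schwartz bump with `1_{[−1/8,1/8]} ≤ χ ≤ 1_{[−1/4,1/4]}`. -/
def IsBump (χ : SchwartzMap ℝ ℝ) : Prop :=
  ∀ θ : ℝ, Set.indicator (Set.Icc (-(1/8) : ℝ) (1/8)) 1 θ ≤ χ θ ∧
    χ θ ≤ Set.indicator (Set.Icc (-(1/4) : ℝ) (1/4)) 1 θ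

/-!
`χ̌_s(y) = 2^{-3s} 𝓕χ(-2^{-3s} y)`, and the Fourier transform of a Schwartz function decays like
`ξ⁻²`, so `|χ̌_s(y)| ≲ 2^{3s} / y²`. Every point `x + n` averaged by `Γ_τ` satisfies
`|x + n| > |x| - τ ≥ (3/4) 2^k τ` because `k ≥ 2`, and `2^{3s} ≤ Q³ ≤ c_p τ`; hence each term, and
so the average, is `≲ 2^{3s} / (2^{2k} τ²) ≲ 2^{-2k} / τ`.
-/

open FourierTransform MeasureTheory
open scoped SchwartzMap

theorem SchwartzMap.exists_sq_mul_norm_fourier_le {E : Type*} [NormedAddCommGroup E]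
    [NormedSpace ℂ E] (f : 𝓢(ℝ, E)) :
    ∃ C, 0 < C ∧ ∀ ξ : ℝ, ξ ^ 2 * ‖𝓕 (f : ℝ → E) ξ‖ ≤ C := by
  obtain ⟨C, hC, hdecay⟩ := (𝓕 f).decay 2 0
  refine ⟨C, hC, fun ξ => ?_⟩
  simpa [norm_iteratedFDeriv_zero, SchwartzMap.fourier_coe, sq_abs] using hdecay ξ

theorem chiCheck_eq_smul_fourier (χ : SchwartzMap ℝ ℝ) (s : ℕ) (y : ℝ) :
    chiCheck χ s y = ((2 : ℝ) ^ (3 * s))⁻¹ •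
      𝓕 (fun θ => (χ θ : ℂ)) (-(((2 : ℝ) ^ (3 * s))⁻¹ * y)) := by
  set a : ℝ := (2 : ℝ) ^ (3 * s)
  have ha : 0 < a := by positivity
  have hscale := Measure.integral_comp_mul_left
    (fun u => Complex.exp (↑(-2 * Real.pi * u * -(a⁻¹ * y)) * Complex.I) • (χ u : ℂ)) a
  rw [abs_of_pos (inv_pos.mpr ha)] at hscale
  rw [Real.fourier_real_eq_integral_exp_smul, ← hscale]
  refine integral_congr_ae (.of_forall fun θ => ?_)
  have hphase : -2 * Real.pi * (a * θ) * -(a⁻¹ * y) = 2 * Real.pi * (y * θ) := by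
    field_simp
  simp only [chiS, eFun, hphase, smul_eq_mul, a]
  push_cast
  ring_nf

theorem exists_sq_mul_norm_chiCheck_le (χ : SchwartzMap ℝ ℝ) :
    ∃ C, 0 < C ∧ ∀ (s : ℕ) (y : ℝ), y ^ 2 * ‖chiCheck χ s y‖ ≤ C * (2 : ℝ) ^ (3 * s) := by
  obtain ⟨C, hC, hdecay⟩ :=
    (SchwartzMap.postcompCLM Complex.ofRealCLM χ).exists_sq_mul_norm_fourier_le
  refine ⟨C, hC, fun s y => ?_⟩
  set a : ℝ := (2 : ℝ) ^ (3 * s)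
  have ha : 0 < a := by positivity
  have h := hdecay (-(a⁻¹ * y))
  rw [chiCheck_eq_smul_fourier, norm_smul, Real.norm_of_nonneg (inv_nonneg.mpr ha.le)]
  calc y ^ 2 * (a⁻¹ * ‖𝓕 (fun θ => (χ θ : ℂ)) (-(a⁻¹ * y))‖)
      = a * ((-(a⁻¹ * y)) ^ 2 * ‖𝓕 (fun θ => (χ θ : ℂ)) (-(a⁻¹ * y))‖) := by
        field_simp
    _ ≤ C * a := by rw [mul_comm C]; exact mul_le_mul_of_nonneg_left h ha.le

theorem lt_abs_add_of_lt_abs {a x n : ℝ} (hx : a < |x|) (hn : |n| ≤ a / 4) :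
    3 / 4 * a < |x + n| := by
  linarith [abs_sub_abs_le_abs_add x n]

theorem norm_gammaConvChiCheck_le {χ : SchwartzMap ℝ ℝ} {s N : ℕ} {x : ℤ} {B : ℝ} (hN : 0 < N)
    (h : ∀ n < N, ‖chiCheck χ s (x + n)‖ ≤ B) : ‖gammaConvChiCheck χ s N x‖ ≤ B := by
  have hN' : (0 : ℝ) < N := by exact_mod_cast hN
  have hsum : ‖∑ n ∈ range N, chiCheck χ s (x + n)‖ ≤ N * B := by
    simpa using norm_sum_le_of_le (range N) fun n hn => h n (mem_range.mp hn)
  rw [gammaConvChiCheck, norm_mul, norm_div, norm_one, Complex.norm_natCast, div_mul_eq_mul_div,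
    one_mul, div_le_iff₀ hN', mul_comm]
  exact hsum

theorem gammaConvChiCheck_decay_general (χ : SchwartzMap ℝ ℝ)
    (cp : ℝ) (hcp : 0 < cp) :
    ∃ C : ℝ, 0 < C ∧ ∀ τ s Q k : ℕ, ∀ x : ℤ, 1 ≤ τ → 1 ≤ s →
      2 ^ s ≤ Q → Q < 2 ^ (s + 1) → (Q : ℝ) ^ 3 ≤ cp * τ → 2 ≤ k →
      (2 : ℝ) ^ k * τ < |(x : ℝ)| → |(x : ℝ)| ≤ (2 : ℝ) ^ (k + 1) * τ →
      ‖gammaConvChiCheck χ s τ x‖ ≤ C * ((2 : ℝ) ^ (2 * k))⁻¹ / τ := by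
  obtain ⟨C, hC, hdecay⟩ := exists_sq_mul_norm_chiCheck_le χ
  refine ⟨2 * C * cp, by positivity, fun τ s Q k x hτ _ hQ _ hQcp hk hx _ => ?_⟩
  have hτ' : (0 : ℝ) < τ := by exact_mod_cast hτ
  have h4k : (4 : ℝ) ≤ 2 ^ k := by
    calc (4 : ℝ) = 2 ^ 2 := by norm_num
      _ ≤ 2 ^ k := pow_le_pow_right₀ (by norm_num) hk
  have h3s : (2 : ℝ) ^ (3 * s) ≤ cp * τ :=
    calc (2 : ℝ) ^ (3 * s) = ((2 : ℝ) ^ s) ^ 3 := by ring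
      _ ≤ (Q : ℝ) ^ 3 := by gcongr; exact_mod_cast hQ
      _ ≤ cp * τ := hQcp
  refine norm_gammaConvChiCheck_le hτ fun n hn => ?_
  have hsq : (3 / 4 * (2 ^ k * τ)) ^ 2 ≤ (x + n : ℝ) ^ 2 := by
    rw [← sq_abs (x + n : ℝ)]
    refine pow_le_pow_left₀ (by positivity) (lt_abs_add_of_lt_abs hx ?_).le 2
    rw [abs_of_nonneg n.cast_nonneg]
    nlinarith [(Nat.cast_lt (α := ℝ)).mpr hn]
  calc ‖chiCheck χ s (x + n)‖ ≤ C * (cp * τ) / (x + n : ℝ) ^ 2 := by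
        rw [le_div_iff₀ ((by positivity : (0 : ℝ) < _).trans_le hsq), mul_comm]
        exact (hdecay s _).trans (by gcongr)
    _ ≤ C * (cp * τ) / (3 / 4 * (2 ^ k * τ)) ^ 2 := by gcongr
    _ ≤ 2 * C * cp * ((2 : ℝ) ^ (2 * k))⁻¹ / τ := by
        rw [div_le_div_iff₀ (by positivity) hτ', pow_mul']
        field_simp
        norm_num

/-- Decay bound: if `2^s ≤ Q < 2^{s+1}`, `Q^3 ≤ c_p·τ`, and `2^k τ < |x| ≤ 2^{k+1} τ`
with `k ≥ 2`, then `|(Γ_τ * χ̌_s)(x)| ≤ C · 2^{−2k}/τ`. -/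
theorem gammaConvChiCheck_decay (χ : SchwartzMap ℝ ℝ) (hχ : IsBump χ)
    (cp : ℝ) (hcp : 0 < cp) :
    ∃ C : ℝ, 0 < C ∧ ∀ τ s Q k : ℕ, ∀ x : ℤ, 1 ≤ τ → 1 ≤ s →
      2 ^ s ≤ Q → Q < 2 ^ (s + 1) → (Q : ℝ) ^ 3 ≤ cp * τ → 2 ≤ k →
      (2 : ℝ) ^ k * τ < |(x : ℝ)| → |(x : ℝ)| ≤ (2 : ℝ) ^ (k + 1) * τ →
      ‖gammaConvChiCheck χ s τ x‖ ≤ C * ((2 : ℝ) ^ (2 * k))⁻¹ / τ :=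
  gammaConvChiCheck_decay_general χ cp hcp
end

section
/- The multipliers L̂_{Q,N} for 2^s ≤ Q < 2^{s+1} have pairwise disjoint supports, and ‖∑_{2^s ≤ Q < 2^{s+1}} L̂_{Q,N}‖_∞ ≤ C · 2^{−s} for an absolute constant C. -/
open Finset

/-!
Around each reduced fraction `A/Q` with `Q < 2^{s+1}`, the bump `χ_s(· − A/Q)` lives on the arc
`|θ − A/Q| ≤ 2^{−3s}/4`. Distinct reduced fractions with such denominators are at distance at least
`1/(QQ') > 2^{−2s−2} ≥ 2 · 2^{−3s}/4`, so these arcs are pairwise disjoint. Hence, at every `θ`, at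
most one term of the double sum over `(Q, A)` is nonzero, and that term has size at most
`2/Q ≤ 2 · 2^{−s}`, since `|Γ̂_N| ≤ 1` and `0 ≤ χ ≤ 1`.
-/

theorem norm_sum_le_of_ne_zero_subsingleton {ι E : Type*} [SeminormedAddCommGroup E]
    {s : Finset ι} {f : ι → E} {C : ℝ} (hC : 0 ≤ C) (hf : ∀ i ∈ s, ‖f i‖ ≤ C)
    (huniq : ∀ i ∈ s, ∀ j ∈ s, f i ≠ 0 → f j ≠ 0 → i = j) : ‖∑ i ∈ s, f i‖ ≤ C := by
  by_cases h : ∃ i ∈ s, f i ≠ 0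
  · obtain ⟨i, hi, hfi⟩ := h
    rw [sum_eq_single_of_mem i hi fun j hj hji =>
      by_contra fun hfj => hji (huniq j hj i hi hfj hfi)]
    exact hf i hi
  · push Not at h
    rwa [sum_eq_zero h, norm_zero]

theorem one_div_mul_le_abs_div_sub_div {A A' Q Q' : ℕ} (hQ : 0 < Q) (hQ' : 0 < Q')
    (hA : A.Coprime Q) (hA' : A'.Coprime Q') (hne : (A, Q) ≠ (A', Q')) :
    1 / ((Q : ℝ) * Q') ≤ |(A : ℝ) / Q - A' / Q'| := by
  have hcross : (A : ℤ) * Q' - A' * Q ≠ 0 := by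
    intro h
    have h' : A * Q' = A' * Q := by exact_mod_cast sub_eq_zero.mp h
    have hQQ : Q = Q' := Nat.dvd_antisymm
      (hA.symm.dvd_of_dvd_mul_left ⟨A', by rw [h', mul_comm]⟩)
      (hA'.symm.dvd_of_dvd_mul_left ⟨A, by rw [← h', mul_comm]⟩)
    subst hQQ
    exact hne (by rw [Nat.eq_of_mul_eq_mul_right hQ h'])
  have heq : (A : ℝ) / Q - A' / Q' = (((A : ℤ) * Q' - A' * Q : ℤ) : ℝ) / ((Q : ℝ) * Q') := by
    push_cast
    field_simp
  have hQQ' : (0 : ℝ) < Q * Q' := by positivity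
  rw [heq, abs_div, abs_of_pos hQQ', ← Int.cast_abs]
  gcongr
  exact_mod_cast Int.one_le_abs hcross

theorem eq_of_abs_sub_div_le {s A A' Q Q' : ℕ} (hs : 1 ≤ s) (hQ : 0 < Q) (hQ2 : Q < 2 ^ (s + 1))
    (hQ' : 0 < Q') (hQ'2 : Q' < 2 ^ (s + 1)) (hA : A.Coprime Q) (hA' : A'.Coprime Q') {θ : ℝ}
    (h : |θ - A / Q| ≤ 1 / (4 * 2 ^ (3 * s))) (h' : |θ - A' / Q'| ≤ 1 / (4 * 2 ^ (3 * s))) :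
    (A, Q) = (A', Q') := by
  by_contra hne
  have hprod : Q * Q' < 2 * 2 ^ (3 * s) :=
    calc Q * Q' < 2 ^ (s + 1) * 2 ^ (s + 1) := Nat.mul_lt_mul'' hQ2 hQ'2
      _ = 2 ^ (2 * s + 2) := by ring
      _ ≤ 2 ^ (3 * s + 1) := Nat.pow_le_pow_right two_pos (by omega)
      _ = 2 * 2 ^ (3 * s) := by ring
  have hprod' : (Q : ℝ) * Q' < 2 * 2 ^ (3 * s) := by exact_mod_cast hprod
  have hfar : 1 / (2 * 2 ^ (3 * s)) < |(A : ℝ) / Q - A' / Q'| :=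
    (one_div_lt_one_div_of_lt (by positivity) hprod').trans_le
      (one_div_mul_le_abs_div_sub_div hQ hQ' hA hA' hne)
  have hnear : |(A : ℝ) / Q - A' / Q'| ≤ |θ - A / Q| + |θ - A' / Q'| := by
    simpa only [abs_sub_comm] using abs_sub_le ((A : ℝ) / Q) θ (A' / Q')
  have hhalf : (1 : ℝ) / (4 * 2 ^ (3 * s)) + 1 / (4 * 2 ^ (3 * s)) = 1 / (2 * 2 ^ (3 * s)) := by
    ring
  linarith

theorem norm_eFun (x : ℝ) : ‖eFun x‖ = 1 := by
  rw [eFun, Complex.norm_exp]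
  norm_num [Complex.mul_re]

theorem norm_gammaHat_le_one (N : ℕ) (θ : ℝ) : ‖gammaHat N θ‖ ≤ 1 := by
  rw [gammaHat, norm_mul, one_div, norm_inv, Complex.norm_natCast]
  calc (N : ℝ)⁻¹ * ‖∑ n ∈ range N, eFun (n * θ)‖ ≤ (N : ℝ)⁻¹ * ∑ n ∈ range N, ‖eFun (n * θ)‖ :=
        by gcongr; exact norm_sum_le _ _
    _ = (N : ℝ)⁻¹ * N := by simp only [norm_eFun, sum_const, card_range, nsmul_eq_mul, mul_one]
    _ ≤ 1 := inv_mul_le_one_of_le₀ le_rfl (Nat.cast_nonneg N)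

namespace IsBump

variable {χ : SchwartzMap ℝ ℝ}

theorem nonneg (hχ : IsBump χ) (x : ℝ) : 0 ≤ χ x :=
  (Set.indicator_nonneg (fun _ _ => zero_le_one) x).trans (hχ x).1

theorem le_one (hχ : IsBump χ) (x : ℝ) : χ x ≤ 1 :=
  (hχ x).2.trans (Set.indicator_le_self' (fun _ _ => zero_le_one) x)

theorem eq_zero_of_lt_abs (hχ : IsBump χ) {x : ℝ} (hx : 1 / 4 < |x|) : χ x = 0 := by
  have hx' : x ∉ Set.Icc (-(1 / 4) : ℝ) (1 / 4) := fun h => hx.not_ge (abs_le.mpr h)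
  have := (hχ x).2
  rw [Set.indicator_of_notMem hx'] at this
  exact this.antisymm (hχ.nonneg x)

theorem abs_le_of_mul_chiS_ne_zero (hχ : IsBump χ) {s : ℕ} {z : ℂ} {θ : ℝ}
    (h : z * (chiS χ s θ : ℂ) ≠ 0) : |θ| ≤ 1 / (4 * 2 ^ (3 * s)) := by
  by_contra! hθ
  refine h ?_
  rw [chiS, hχ.eq_zero_of_lt_abs, Complex.ofReal_zero, mul_zero]
  rw [div_lt_iff₀ (by positivity)] at hθ
  rw [abs_mul, abs_of_pos (by positivity)]
  linarith

end IsBump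

section lHat

variable {χ : SchwartzMap ℝ ℝ} {s Q Q' N : ℕ}

theorem exists_abs_sub_le_of_lHat_ne_zero (hχ : IsBump χ) {θ : ℝ} (h : lHat χ s Q N θ ≠ 0) :
    ∃ A : ℕ, A.Coprime Q ∧ |θ - A / Q| ≤ 1 / (4 * 2 ^ (3 * s)) := by
  obtain ⟨A, hA, hterm⟩ := exists_ne_zero_of_sum_ne_zero (right_ne_zero_of_mul h)
  exact ⟨A, (mem_filter.mp hA).2, hχ.abs_le_of_mul_chiS_ne_zero hterm⟩

theorem eq_of_lHat_ne_zero (hχ : IsBump χ) (hs : 1 ≤ s) (hQ : 0 < Q) (hQ2 : Q < 2 ^ (s + 1))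
    (hQ' : 0 < Q') (hQ'2 : Q' < 2 ^ (s + 1)) {θ : ℝ} (h : lHat χ s Q N θ ≠ 0)
    (h' : lHat χ s Q' N θ ≠ 0) : Q = Q' := by
  obtain ⟨A, hA, hθA⟩ := exists_abs_sub_le_of_lHat_ne_zero hχ h
  obtain ⟨A', hA', hθA'⟩ := exists_abs_sub_le_of_lHat_ne_zero hχ h'
  exact congrArg Prod.snd (eq_of_abs_sub_div_le hs hQ hQ2 hQ' hQ'2 hA hA' hθA hθA')

theorem norm_lHat_le (hχ : IsBump χ) (hs : 1 ≤ s) (hQ : 0 < Q) (hQ2 : Q < 2 ^ (s + 1))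
    (θ : ℝ) : ‖lHat χ s Q N θ‖ ≤ 2 / Q := by
  rw [lHat, norm_mul, norm_div, Complex.norm_natCast, Complex.norm_ofNat]
  refine mul_le_of_le_one_right (by positivity) (norm_sum_le_of_ne_zero_subsingleton zero_le_one
    (fun A _ => ?_) fun A hA A' hA' h h' => ?_)
  · rw [norm_mul, Complex.norm_real, Real.norm_eq_abs, chiS, abs_of_nonneg (hχ.nonneg _)]
    exact mul_le_one₀ (norm_gammaHat_le_one N _) (hχ.nonneg _) (hχ.le_one _)
  · exact congrArg Prod.fst (eq_of_abs_sub_div_le hs hQ hQ2 hQ hQ2 (mem_filter.mp hA).2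
      (mem_filter.mp hA').2 (hχ.abs_le_of_mul_chiS_ne_zero h) (hχ.abs_le_of_mul_chiS_ne_zero h'))

end lHat

/-- For `2^s ≤ Q < 2^{s+1}` the multipliers `L̂_{Q,N}` have pairwise disjoint supports, and
`‖∑_{2^s ≤ Q < 2^{s+1}} L̂_{Q,N}‖_∞ ≤ C · 2^{−s}`. -/
theorem lHat_disjoint_and_bound (χ : SchwartzMap ℝ ℝ) (hχ : IsBump χ) :
    ∃ C : ℝ, 0 < C ∧ ∀ s N : ℕ, 1 ≤ s → 1 ≤ N →
      (∀ Q Q' : ℕ, 2 ^ s ≤ Q → Q < 2 ^ (s + 1) → 2 ^ s ≤ Q' → Q' < 2 ^ (s + 1) → Q ≠ Q' →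
        Disjoint (Function.support (lHat χ s Q N)) (Function.support (lHat χ s Q' N)))
      ∧ ∀ θ : ℝ, ‖∑ Q ∈ Finset.Ico (2 ^ s) (2 ^ (s + 1)), lHat χ s Q N θ‖
          ≤ C * ((2 : ℝ) ^ s)⁻¹ := by
  refine ⟨2, two_pos, fun s N hs _ => ?_⟩
  have hpos : ∀ {Q : ℕ}, 2 ^ s ≤ Q → 0 < Q := (pow_pos two_pos s).trans_le
  refine ⟨fun Q Q' hQ hQ2 hQ' hQ'2 hne => ?_, fun θ => ?_⟩
  · exact Set.disjoint_left.mpr fun θ h h' =>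
      hne (eq_of_lHat_ne_zero hχ hs (hpos hQ) hQ2 (hpos hQ') hQ'2 h h')
  · refine norm_sum_le_of_ne_zero_subsingleton (by positivity) (fun Q hQ => ?_)
      fun Q hQ Q' hQ' h h' => ?_
    · obtain ⟨hQ1, hQ2⟩ := mem_Ico.mp hQ
      calc ‖lHat χ s Q N θ‖ ≤ 2 / Q := norm_lHat_le hχ hs (hpos hQ1) hQ2 θ
        _ ≤ 2 * ((2 : ℝ) ^ s)⁻¹ := by rw [div_eq_mul_inv]; gcongr; exact_mod_cast hQ1
    · obtain ⟨hQ1, hQ2⟩ := mem_Ico.mp hQ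
      obtain ⟨hQ'1, hQ'2⟩ := mem_Ico.mp hQ'
      exact eq_of_lHat_ne_zero hχ hs (hpos hQ1) hQ2 (hpos hQ'1) hQ'2 h h'
end
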